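/- Let U, V, Z be finite sets, H_A, H_B finite-dimensional complex Hilbert spaces, {Λ^A_u}_{u∈U} a POVM on H_A, {Λ^B_v}_{v∈V} a POVM on H_B, ρ^{AB} a density operator on H_A ⊗ H_B, and set ω = ρ^{AB} and p(u,v) = Tr{(Λ^A_u ⊗ Λ^B_v) ρ^{AB}}. Let g : U × V → Z, let G^A be a finite collection of subsets of U and G^B a finite collection of subsets of V, and let p_A(w_A|u) ≥ 0 satisfy ∑_{w_A∈G^A} p_A(w_A|u) = 1 for every u and p_A(w_A|u) = 0 unless u ∈ w_A, and similarly p_B(w_B|v). Define Λ^A_{w_A} = ∑_{u∈w_A} p_A(w_A|u) Λ^A_u and Λ^B_{w_B} = ∑_{v∈w_B} p_B(w_B|v) Λ^B_v. Suppose g̃ : G^A × G^B → Z satisfies g̃(w_A,w_B) = g(u,v) whenever u ∈ w_A, v ∈ w_B, p_A(w_A|u) > 0, p_B(w_B|v) > 0 and p(u,v) > 0. Then for every z ∈ Z: √ω (∑_{(w_A,w_B): g̃(w_A,w_B)=z} Λ^A_{w_A} ⊗ Λ^B_{w_B}) √ω = √ω (∑_{(u,v): g(u,v)=z} Λ^A_u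 ⊗ Λ^B_v) √ω. -/

import Mathlib

open scoped Kronecker ComplexOrder

-- The positive semidefinite square root of a matrix (junk value `0` if not PSD).
open Classical in
noncomputable def matSqrt {n : Type*} [Fintype n] [DecidableEq n]
    (M : Matrix n n ℂ) : Matrix n n ℂ :=
  if h : M.PosSemidef then
    (h.1.eigenvectorUnitary : Matrix n n ℂ) *
      Matrix.diagonal ((↑) ∘ (fun x : ℝ => Real.sqrt x) ∘ h.1.eigenvalues) *
      (star h.1.eigenvectorUnitary : Matrix n n ℂ)
  else 0

/-!
Both measurements are linear combinations of the product operators `Λ^A_u ⊗ Λ^B_v`. Expanding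
the coarse-grained one, the coefficient of `Λ^A_u ⊗ Λ^B_v` is
`∑_{g̃(w_A,w_B)=z} p_A(w_A|u) p_B(w_B|v)`. When `p(u,v) > 0`, the consistency of `g̃` with `g`
makes this `[g(u,v) = z] · (∑ p_A(·|u)) (∑ p_B(·|v)) = [g(u,v) = z]`, the coefficient in the
target measurement. When `p(u,v) = 0`, the positive semidefinite operator
`√ω (Λ^A_u ⊗ Λ^B_v) √ω` has trace `p(u,v) = 0`, so it vanishes and its coefficient is irrelevant.
-/

open scoped MatrixOrder
open Matrix Finset

lemma matSqrt_eq_sqrt {n : Type*} [Fintype n] [DecidableEq n] {M : Matrix n n ℂ}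
    (hM : M.PosSemidef) : matSqrt M = CFC.sqrt M := by
  rw [CFC.sqrt_eq_real_sqrt M hM.nonneg, cfcₙ_eq_cfc, hM.1.cfc_eq, IsHermitian.cfc,
    Unitary.conjStarAlgAut_apply, matSqrt, dif_pos hM]
  rfl

section Sandwich

variable {n : Type*} [Fintype n] [DecidableEq n] {ρ : Matrix n n ℂ}

lemma posSemidef_matSqrt_mul_mul_matSqrt (hρ : ρ.PosSemidef) {A : Matrix n n ℂ}
    (hA : A.PosSemidef) : (matSqrt ρ * A * matSqrt ρ).PosSemidef := by
  have hS : (matSqrt ρ)ᴴ = matSqrt ρ := by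
    rw [matSqrt_eq_sqrt hρ, ← star_eq_conjTranspose, (CFC.sqrt_nonneg ρ).isSelfAdjoint.star_eq]
  simpa only [hS] using hA.mul_mul_conjTranspose_same (matSqrt ρ)

lemma trace_matSqrt_mul_mul_matSqrt (hρ : ρ.PosSemidef) (A : Matrix n n ℂ) :
    (matSqrt ρ * A * matSqrt ρ).trace = (A * ρ).trace := by
  rw [trace_mul_cycle, matSqrt_eq_sqrt hρ, CFC.sqrt_mul_sqrt_self ρ hρ.nonneg, trace_mul_comm]

lemma matSqrt_mul_mul_matSqrt_eq_zero (hρ : ρ.PosSemidef) {A : Matrix n n ℂ}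
    (hA : A.PosSemidef) (h : (A * ρ).trace.re ≤ 0) : matSqrt ρ * A * matSqrt ρ = 0 := by
  have hpsd := posSemidef_matSqrt_mul_mul_matSqrt hρ hA
  rw [← hpsd.trace_eq_zero_iff]
  have := Complex.nonneg_iff.mp hpsd.trace_nonneg
  rw [trace_matSqrt_mul_mul_matSqrt hρ] at this ⊢
  exact Complex.ext (le_antisymm h this.1) this.2.symm

end Sandwich

lemma sandwich_sum_smul_congr {n ι κ : Type*} [Fintype n] [Fintype ι] [Fintype κ]
    (S : Matrix n n ℂ) (T : ι → κ → Matrix n n ℂ) {c d : ι → κ → ℂ}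
    (h : ∀ i j, c i j = d i j ∨ S * T i j * S = 0) :
    S * (∑ i, ∑ j, c i j • T i j) * S = S * (∑ i, ∑ j, d i j • T i j) * S := by
  simp only [mul_sum, sum_mul, Matrix.mul_smul, Matrix.smul_mul]
  refine sum_congr rfl fun i _ => sum_congr rfl fun j _ => ?_
  rcases h i j with h | h <;> simp [h]

lemma sum_smul_kronecker_sum_smul {m n ι κ : Type*} [Fintype ι] [Fintype κ]
    (a : ι → ℂ) (X : ι → Matrix m m ℂ) (b : κ → ℂ) (Y : κ → Matrix n n ℂ) :
    (∑ i, a i • X i) ⊗ₖ (∑ j, b j • Y j) = ∑ i, ∑ j, (a i * b j) • (X i ⊗ₖ Y j) := by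
  ext ⟨i₁, i₂⟩ ⟨j₁, j₂⟩
  simp only [kronecker_apply, Matrix.sum_apply, Matrix.smul_apply, smul_eq_mul, sum_mul_sum,
    mul_mul_mul_comm]

lemma sum_ite_kronecker_eq_sum_smul {m n ι κ α β Z : Type*} [Fintype ι] [Fintype κ]
    [DecidableEq Z] (s : Finset α) (t : Finset β) (f : α → β → Z) (z : Z)
    (a : α → ι → ℝ) (X : ι → Matrix m m ℂ) (b : β → κ → ℝ) (Y : κ → Matrix n n ℂ) :
    ∑ x ∈ s, ∑ y ∈ t,
        (if f x y = z then (∑ i, (a x i : ℂ) • X i) ⊗ₖ (∑ j, (b y j : ℂ) • Y j) else 0) =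
      ∑ i, ∑ j, ((∑ x ∈ s, ∑ y ∈ t, if f x y = z then a x i * b y j else 0 : ℝ) : ℂ) •
        (X i ⊗ₖ Y j) := by
  have hterm : ∀ x y, (if f x y = z then (∑ i, (a x i : ℂ) • X i) ⊗ₖ (∑ j, (b y j : ℂ) • Y j)
      else 0) = ∑ i, ∑ j, ((if f x y = z then a x i * b y j else 0 : ℝ) : ℂ) • (X i ⊗ₖ Y j) := by
    intro x y
    split_ifs
    · simp only [sum_smul_kronecker_sum_smul, Complex.ofReal_mul]
    · simp
  simp only [hterm, Complex.ofReal_sum, sum_smul]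
  rw [sum_congr rfl fun x _ => Finset.sum_comm.trans (sum_congr rfl fun _ _ => Finset.sum_comm)]
  exact Finset.sum_comm.trans (sum_congr rfl fun _ _ => Finset.sum_comm)

lemma sum_mul_sum_ite_eq_ite {α β Z : Type*} [DecidableEq Z] {s : Finset α} {t : Finset β}
    {a : α → ℝ} {b : β → ℝ} (ha0 : ∀ x ∈ s, 0 ≤ a x) (ha1 : ∑ x ∈ s, a x = 1)
    (hb0 : ∀ y ∈ t, 0 ≤ b y) (hb1 : ∑ y ∈ t, b y = 1) {f : α → β → Z} {z₀ : Z}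
    (hf : ∀ x ∈ s, ∀ y ∈ t, 0 < a x → 0 < b y → f x y = z₀) (z : Z) :
    ∑ x ∈ s, ∑ y ∈ t, (if f x y = z then a x * b y else 0) = if z₀ = z then 1 else 0 := by
  have hterm : ∀ x ∈ s, ∀ y ∈ t,
      (if f x y = z then a x * b y else 0) = if z₀ = z then a x * b y else 0 := by
    intro x hx y hy
    rcases (ha0 x hx).eq_or_lt with hax | hax
    · simp [← hax]
    rcases (hb0 y hy).eq_or_lt with hby | hby
    · simp [← hby]
    rw [hf x hx y hy hax hby]
  rw [sum_congr rfl fun x hx => sum_congr rfl fun y hy => hterm x hx y hy]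
  split_ifs
  · rw [← sum_mul_sum, ha1, hb1, one_mul]
  · simp

theorem sandwiched_coarse_grained_eq_target_general
    {U V Z HA HB : Type*}
    [Fintype U] [Fintype V]
    [DecidableEq Z]
    [Fintype HA] [DecidableEq HA] [Fintype HB] [DecidableEq HB]
    -- the POVMs on H_A and H_B
    (ΛA : U → Matrix HA HA ℂ) (hΛA : ∀ u, (ΛA u).PosSemidef)
    (ΛB : V → Matrix HB HB ℂ) (hΛB : ∀ v, (ΛB v).PosSemidef)
    -- the density operator ρ^{AB} = ω
    (ρ : Matrix (HA × HB) (HA × HB) ℂ) (hρ : ρ.PosSemidef)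
    -- the induced outcome probabilities p(u,v) = Tr{(Λ^A_u ⊗ Λ^B_v) ρ}
    (p : U → V → ℝ)
    (hp : ∀ u v, p u v = (((ΛA u ⊗ₖ ΛB v) * ρ).trace).re)
    -- the function g and the collections of subsets G^A, G^B
    (g : U → V → Z)
    (GA : Finset (Finset U)) (GB : Finset (Finset V))
    -- the stochastic kernels p_A(w_A|u) and p_B(w_B|v)
    (pA : Finset U → U → ℝ)
    (hpA0 : ∀ wA u, 0 ≤ pA wA u)
    (hpA1 : ∀ u, ∑ wA ∈ GA, pA wA u = 1)
    (hpAmem : ∀ wA ∈ GA, ∀ u, u ∉ wA → pA wA u = 0)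
    (pB : Finset V → V → ℝ)
    (hpB0 : ∀ wB v, 0 ≤ pB wB v)
    (hpB1 : ∀ v, ∑ wB ∈ GB, pB wB v = 1)
    (hpBmem : ∀ wB ∈ GB, ∀ v, v ∉ wB → pB wB v = 0)
    -- the coarse-grained measurement operators
    (ΛAw : Finset U → Matrix HA HA ℂ)
    (hΛAw : ∀ wA, ΛAw wA = ∑ u ∈ wA, (pA wA u : ℂ) • ΛA u)
    (ΛBw : Finset V → Matrix HB HB ℂ)
    (hΛBw : ∀ wB, ΛBw wB = ∑ v ∈ wB, (pB wB v : ℂ) • ΛB v)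
    -- the function g̃, consistent with g on positive-probability pairs
    (gt : Finset U → Finset V → Z)
    (hgt : ∀ wA ∈ GA, ∀ wB ∈ GB, ∀ u ∈ wA, ∀ v ∈ wB,
      0 < pA wA u → 0 < pB wB v → 0 < p u v → gt wA wB = g u v) :
    ∀ z : Z,
      matSqrt ρ *
        (∑ wA ∈ GA, ∑ wB ∈ GB,
          if gt wA wB = z then ΛAw wA ⊗ₖ ΛBw wB else 0) * matSqrt ρ
      = matSqrt ρ *
        (∑ u : U, ∑ v : V,
          if g u v = z then ΛA u ⊗ₖ ΛB v else 0) * matSqrt ρ := by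
  intro z
  have hΛAw_univ : ∀ wA ∈ GA, ΛAw wA = ∑ u, (pA wA u : ℂ) • ΛA u := fun wA hwA => by
    rw [hΛAw, sum_subset (subset_univ wA) fun u _ hu => by simp [hpAmem wA hwA u hu]]
  have hΛBw_univ : ∀ wB ∈ GB, ΛBw wB = ∑ v, (pB wB v : ℂ) • ΛB v := fun wB hwB => by
    rw [hΛBw, sum_subset (subset_univ wB) fun v _ hv => by simp [hpBmem wB hwB v hv]]
  have hfine : (∑ u, ∑ v, if g u v = z then ΛA u ⊗ₖ ΛB v else 0) =
      ∑ u, ∑ v, ((if g u v = z then 1 else 0 : ℝ) : ℂ) • (ΛA u ⊗ₖ ΛB v) := by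
    refine sum_congr rfl fun u _ => sum_congr rfl fun v _ => ?_
    split_ifs <;> simp
  rw [sum_congr rfl fun wA hwA => sum_congr rfl fun wB hwB => by
      rw [hΛAw_univ wA hwA, hΛBw_univ wB hwB],
    sum_ite_kronecker_eq_sum_smul, hfine]
  refine sandwich_sum_smul_congr _ _ fun u v => ?_
  by_cases hpuv : 0 < p u v
  · left
    congr 1
    refine sum_mul_sum_ite_eq_ite (fun wA _ => hpA0 wA u) (hpA1 u) (fun wB _ => hpB0 wB v) (hpB1 v)
      (fun wA hwA wB hwB hu hv => hgt wA hwA wB hwB u ?_ v ?_ hu hv hpuv) z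
    · exact not_imp_comm.mp (hpAmem wA hwA u) hu.ne'
    · exact not_imp_comm.mp (hpBmem wB hwB v) hv.ne'
  · right
    exact matSqrt_mul_mul_matSqrt_eq_zero hρ ((hΛA u).kronecker (hΛB v))
      (hp u v ▸ not_lt.mp hpuv)

/-- Section V-3 of the paper: the coarse-grained measurement built from the
independent-set POVMs is, after sandwiching by `√ω`, equal to the target
measurement `Λ_z^{AB}`. -/
theorem sandwiched_coarse_grained_eq_target
    {U V Z HA HB : Type*}
    [Fintype U] [DecidableEq U] [Fintype V] [DecidableEq V]
    [Fintype Z] [DecidableEq Z]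
    [Fintype HA] [DecidableEq HA] [Fintype HB] [DecidableEq HB]
    -- the POVMs on H_A and H_B
    (ΛA : U → Matrix HA HA ℂ) (hΛA : ∀ u, (ΛA u).PosSemidef)
    (hΛAsum : ∑ u, ΛA u = 1)
    (ΛB : V → Matrix HB HB ℂ) (hΛB : ∀ v, (ΛB v).PosSemidef)
    (hΛBsum : ∑ v, ΛB v = 1)
    -- the density operator ρ^{AB} = ω
    (ρ : Matrix (HA × HB) (HA × HB) ℂ) (hρ : ρ.PosSemidef)
    (hρtr : ρ.trace = 1)
    -- the induced outcome probabilities p(u,v) = Tr{(Λ^A_u ⊗ Λ^B_v) ρ}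
    (p : U → V → ℝ)
    (hp : ∀ u v, p u v = (((ΛA u ⊗ₖ ΛB v) * ρ).trace).re)
    -- the function g and the collections of subsets G^A, G^B
    (g : U → V → Z)
    (GA : Finset (Finset U)) (GB : Finset (Finset V))
    -- the stochastic kernels p_A(w_A|u) and p_B(w_B|v)
    (pA : Finset U → U → ℝ)
    (hpA0 : ∀ wA u, 0 ≤ pA wA u)
    (hpA1 : ∀ u, ∑ wA ∈ GA, pA wA u = 1)
    (hpAmem : ∀ wA ∈ GA, ∀ u, u ∉ wA → pA wA u = 0)
    (pB : Finset V → V → ℝ)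
    (hpB0 : ∀ wB v, 0 ≤ pB wB v)
    (hpB1 : ∀ v, ∑ wB ∈ GB, pB wB v = 1)
    (hpBmem : ∀ wB ∈ GB, ∀ v, v ∉ wB → pB wB v = 0)
    -- the coarse-grained measurement operators
    (ΛAw : Finset U → Matrix HA HA ℂ)
    (hΛAw : ∀ wA, ΛAw wA = ∑ u ∈ wA, (pA wA u : ℂ) • ΛA u)
    (ΛBw : Finset V → Matrix HB HB ℂ)
    (hΛBw : ∀ wB, ΛBw wB = ∑ v ∈ wB, (pB wB v : ℂ) • ΛB v)
    -- the function g̃, consistent with g on positive-probability pairs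
    (gt : Finset U → Finset V → Z)
    (hgt : ∀ wA ∈ GA, ∀ wB ∈ GB, ∀ u ∈ wA, ∀ v ∈ wB,
      0 < pA wA u → 0 < pB wB v → 0 < p u v → gt wA wB = g u v) :
    ∀ z : Z,
      matSqrt ρ *
        (∑ wA ∈ GA, ∑ wB ∈ GB,
          if gt wA wB = z then ΛAw wA ⊗ₖ ΛBw wB else 0) * matSqrt ρ
      = matSqrt ρ *
        (∑ u : U, ∑ v : V,
          if g u v = z then ΛA u ⊗ₖ ΛB v else 0) * matSqrt ρ :=
  sandwiched_coarse_grained_eq_target_general ΛA hΛA ΛB hΛB ρ hρ p hp g GA GB pA hpA0 hpA1 hpAmem pB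
    hpB0 hpB1 hpBmem ΛAw hΛAw ΛBw hΛBw gt hgt
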